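/- arXiv:1803.04190 — 4 statements merged into one kernel-verified Lean document; each statement's English description precedes it below -/
import Mathlib

section
/- For a point p = (x,y,z) in Z^3, the 18-neighbor graph distance from the origin to p equals max{ max(|x|,|y|,|z|), ⌈(|x|+|y|+|z|)/2⌉ }. -/
/-- Two points of `ℤ³` are 18-neighbors: distinct, each coordinate differs by at most 1,
and the sum of absolute coordinate differences is at most 2. -/
def Adj18 (p q : ℤ × ℤ × ℤ) : Prop :=
  p ≠ q ∧ (p.1 - q.1).natAbs ≤ 1 ∧ (p.2.1 - q.2.1).natAbs ≤ 1 ∧ (p.2.2 - q.2.2).natAbs ≤ 1 ∧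
    (p.1 - q.1).natAbs + (p.2.1 - q.2.1).natAbs + (p.2.2 - q.2.2).natAbs ≤ 2

/-- `f` is an 18-neighbor path of length `n` from `p` to `q`. -/
def IsPath18 (n : ℕ) (f : Fin (n + 1) → ℤ × ℤ × ℤ) (p q : ℤ × ℤ × ℤ) : Prop :=
  f 0 = p ∧ f (Fin.last n) = q ∧ ∀ t : Fin n, Adj18 (f t.castSucc) (f t.succ)

/-- The 18-neighbor graph distance: the least length of an 18-neighbor path. -/
noncomputable def dist18 (p q : ℤ × ℤ × ℤ) : ℕ :=
  sInf {n : ℕ | ∃ f : Fin (n + 1) → ℤ × ℤ × ℤ, IsPath18 n f p q}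

/-!
A single 18-step changes each `|coordinate|` by at most `1` and their sum by at most `2`, so the
right-hand side grows by at most `1` per step and is a lower bound. Conversely, moving the two
largest coordinates one unit towards `0` always lowers it by exactly `1`, which yields a path of
that length.
-/

def gauge18 (a b c : ℕ) : ℕ :=
  max (max a (max b c)) ((a + b + c + 1) / 2)

def norm18 (p : ℤ × ℤ × ℤ) : ℕ :=
  gauge18 p.1.natAbs p.2.1.natAbs p.2.2.natAbs

lemma gauge18_le_succ {a b c a' b' c' : ℕ} (ha : a' ≤ a + 1) (hb : b' ≤ b + 1) (hc : c' ≤ c + 1)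
    (hs : a' + b' + c' ≤ a + b + c + 2) : gauge18 a' b' c' ≤ gauge18 a b c + 1 := by
  unfold gauge18
  omega

-- If the second-largest coordinate is `0`, truncated subtraction leaves it at `0`.
lemma exists_gauge18_add_one_eq {a b c : ℕ} (h : 0 < a + b + c) :
    ∃ a' b' c', a' ≤ a ∧ a ≤ a' + 1 ∧ b' ≤ b ∧ b ≤ b' + 1 ∧ c' ≤ c ∧ c ≤ c' + 1 ∧
      a + b + c ≤ a' + b' + c' + 2 ∧ a' + b' + c' < a + b + c ∧
      gauge18 a' b' c' + 1 = gauge18 a b c := by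
  unfold gauge18
  rcases le_total a b with hab | hab <;> rcases le_total b c with hbc | hbc <;>
    rcases le_total a c with hac | hac <;>
    first
    | exact ⟨a - 1, b - 1, c, by omega⟩
    | exact ⟨a - 1, b, c - 1, by omega⟩
    | exact ⟨a, b - 1, c - 1, by omega⟩

lemma Int.exists_natAbs_eq_of_le {x : ℤ} {n : ℕ} (h : n ≤ x.natAbs) :
    ∃ x' : ℤ, x'.natAbs = n ∧ (x - x').natAbs = x.natAbs - n := by
  rcases le_total 0 x with hx | hx
  · exact ⟨n, by omega, by omega⟩
  · exact ⟨-n, by omega, by omega⟩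

lemma norm18_le_of_adj18 {p q : ℤ × ℤ × ℤ} (h : Adj18 p q) : norm18 q ≤ norm18 p + 1 := by
  obtain ⟨-, h1, h2, h3, hs⟩ := h
  exact gauge18_le_succ (by omega) (by omega) (by omega) (by omega)

lemma exists_adj18_norm18_add_one_eq {p : ℤ × ℤ × ℤ} (hp : p ≠ (0, 0, 0)) :
    ∃ q, Adj18 q p ∧ norm18 q + 1 = norm18 p := by
  obtain ⟨x, y, z⟩ := p
  have hpos : 0 < x.natAbs + y.natAbs + z.natAbs := by
    simp only [ne_eq, Prod.mk.injEq, not_and_or] at hp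
    omega
  obtain ⟨a, b, c, ha, ha', hb, hb', hc, hc', hs, hs', hg⟩ := exists_gauge18_add_one_eq hpos
  obtain ⟨x', rfl, hx⟩ := Int.exists_natAbs_eq_of_le ha
  obtain ⟨y', rfl, hy⟩ := Int.exists_natAbs_eq_of_le hb
  obtain ⟨z', rfl, hz⟩ := Int.exists_natAbs_eq_of_le hc
  refine ⟨(x', y', z'), ⟨?_, ?_, ?_, ?_, ?_⟩, hg⟩
  · rintro ⟨⟩
    omega
  all_goals dsimp only; omega

lemma IsPath18.snoc {n : ℕ} {f : Fin (n + 1) → ℤ × ℤ × ℤ} {p q r : ℤ × ℤ × ℤ}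
    (hf : IsPath18 n f p q) (hqr : Adj18 q r) :
    IsPath18 (n + 1) (Fin.snoc f r) p r := by
  obtain ⟨hf0, hfn, hadj⟩ := hf
  refine ⟨?_, Fin.snoc_last _ _, Fin.lastCases ?_ fun t => ?_⟩
  · rw [← Fin.castSucc_zero, Fin.snoc_castSucc, hf0]
  · rw [Fin.succ_last, Fin.snoc_castSucc, Fin.snoc_last, hfn]
    exact hqr
  · rw [Fin.succ_castSucc, Fin.snoc_castSucc, Fin.snoc_castSucc]
    exact hadj t

lemma exists_isPath18_of_norm18_eq (n : ℕ) :
    ∀ p, norm18 p = n → ∃ f : Fin (n + 1) → ℤ × ℤ × ℤ, IsPath18 n f (0, 0, 0) p := by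
  induction n with
  | zero =>
    rintro ⟨x, y, z⟩ hp
    obtain ⟨rfl, rfl, rfl⟩ : x = 0 ∧ y = 0 ∧ z = 0 := by
      simp only [norm18, gauge18] at hp
      omega
    exact ⟨fun _ => (0, 0, 0), rfl, rfl, Fin.elim0⟩
  | succ n ih =>
    intro p hp
    have hp0 : p ≠ (0, 0, 0) := by
      rintro rfl
      simp [norm18, gauge18] at hp
    obtain ⟨q, hqp, hq⟩ := exists_adj18_norm18_add_one_eq hp0
    obtain ⟨f, hf⟩ := ih q (by omega)
    exact ⟨_, hf.snoc hqp⟩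

lemma IsPath18.le_add_length {n : ℕ} {f : Fin (n + 1) → ℤ × ℤ × ℤ} {p q : ℤ × ℤ × ℤ}
    (φ : ℤ × ℤ × ℤ → ℕ) (hφ : ∀ r s, Adj18 r s → φ s ≤ φ r + 1) (hf : IsPath18 n f p q) :
    φ q ≤ φ p + n := by
  obtain ⟨hf0, hfn, hadj⟩ := hf
  have hbound : ∀ k : Fin (n + 1), φ (f k) ≤ φ p + k := by
    intro k
    induction k using Fin.induction with
    | zero => simp [hf0]
    | succ t ih =>
      have hstep := hφ _ _ (hadj t)
      simp only [Fin.val_succ, Fin.val_castSucc] at ih ⊢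
      omega
  simpa [hfn] using hbound (Fin.last n)

/-- The 18-neighbor graph distance from the origin to `(x,y,z)` equals
`max{max(|x|,|y|,|z|), ⌈(|x|+|y|+|z|)/2⌉}`. -/
theorem dist18_eq (x y z : ℤ) :
    dist18 (0, 0, 0) (x, y, z) =
      max (max x.natAbs (max y.natAbs z.natAbs))
        ((x.natAbs + y.natAbs + z.natAbs + 1) / 2) := by
  change dist18 (0, 0, 0) (x, y, z) = norm18 (x, y, z)
  have hmem : norm18 (x, y, z) ∈ {n : ℕ | ∃ f, IsPath18 n f (0, 0, 0) (x, y, z)} :=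
    exists_isPath18_of_norm18_eq _ (x, y, z) rfl
  refine le_antisymm (Nat.sInf_le hmem) ?_
  obtain ⟨f, hf⟩ := Nat.sInf_mem ⟨_, hmem⟩
  have hlen := hf.le_add_length norm18 fun _ _ => norm18_le_of_adj18
  rwa [show norm18 (0, 0, 0) = 0 from rfl, zero_add] at hlen
end

section
/- Let i,j,k ≥ 0 with i ≥ j+k, so that the 18-neighbor distance from (0,0,0) to (i,j,k) equals i. Then the number of shortest 18-neighbor paths from (0,0,0) to (i,j,k) equals the sum over all nonnegative integers a,b with 2(a+b) ≤ i−j−k of i! / (a!·b!·(k+a)!·(j+b)!·(i−j−k−2(a+b))!). -/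
/-!
On a path of length `i` to `(i, j, k)` each step raises the `x`-coordinate by at most one, hence by
exactly one, and the 18-neighbour condition then leaves for its `(y, z)`-displacement only
`0, ±e_y, ±e_z`. Shortest paths are therefore the words of length `i` in these five letters with
`#(+e_y) - #(-e_y) = j` and `#(+e_z) - #(-e_z) = k`. Writing `a = #(-e_z)` and `b = #(-e_y)`, the
letter counts are `a, b, k + a, j + b, i - j - k - 2(a + b)`, and the words with prescribed letter
counts are counted by the multinomial coefficient.
-/

open Finset

section FiberCard

variable {ι α : Type*} [Fintype ι] [DecidableEq α]

def fiberCard (c : ι → α) (x : α) : ℕ := #{t | c t = x}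

@[to_additive]
theorem prod_comp_eq_prod_pow_fiberCard {M : Type*} [CommMonoid M] [Fintype α]
    (c : ι → α) (f : α → M) : ∏ t, f (c t) = ∏ x, f x ^ fiberCard c x := by
  rw [← prod_fiberwise' univ c f]
  exact prod_congr rfl fun x _ => prod_const _

theorem sum_fiberCard [Fintype α] (c : ι → α) : ∑ x, fiberCard c x = Fintype.card ι :=
  (card_eq_sum_card_fiberwise fun t _ => mem_univ (c t)).symm

open MvPolynomial in
/-- Expanding `(∑ x, X x) ^ n` as a sum over words `c : Fin n → α` gives the monomial
`∏ x, X x ^ fiberCard c x` once per word, while the multinomial theorem gives its coefficient. -/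
theorem card_fiberCard_eq_multinomial [Fintype α] {n : ℕ} (m : α → ℕ) (hm : ∑ x, m x = n) :
    Nat.card {c : Fin n → α // fiberCard c = m} = Nat.multinomial univ m := by
  have hmonomial : ∀ c : Fin n → α, ∏ t, (X (c t) : MvPolynomial α ℕ) =
      monomial (Finsupp.equivFunOnFinite.symm (fiberCard c)) 1 := by
    intro c
    rw [prod_comp_eq_prod_pow_fiberCard, monomial_eq, Finsupp.prod_fintype _ _ (by simp)]
    simp
  have hcoeff := coeff_sum_X_pow_of_fintype (R := ℕ) (Finsupp.equivFunOnFinite.symm m) n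
  rw [Fintype.sum_pow, coeff_sum] at hcoeff
  simp only [hmonomial, coeff_monomial, EmbeddingLike.apply_eq_iff_eq] at hcoeff
  rw [Finsupp.sum_fintype _ _ (by simp), Finsupp.multinomial_eq_of_support_subset (subset_univ _)]
    at hcoeff
  simp only [Finsupp.coe_equivFunOnFinite_symm, hm, if_true] at hcoeff
  rw [Nat.card_eq_fintype_card, Fintype.card_subtype, card_filter]
  exact_mod_cast hcoeff

end FiberCard

theorem adj18_iff_adj18_zero_neg_add {p q : ℤ × ℤ × ℤ} : Adj18 p q ↔ Adj18 0 (-p + q) := by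
  obtain ⟨p₁, p₂, p₃⟩ := p
  obtain ⟨q₁, q₂, q₃⟩ := q
  simp only [Adj18, ne_eq, Prod.ext_iff, Prod.fst_add, Prod.snd_add, Prod.fst_neg, Prod.snd_neg,
    Prod.fst_zero, Prod.snd_zero]
  constructor <;> rintro ⟨h, h'⟩ <;> refine ⟨fun h'' => h ?_, ?_⟩ <;> omega

theorem Fin.partialSum_last {M : Type*} [AddCommMonoid M] {n : ℕ} (δ : Fin n → M) :
    Fin.partialSum δ (Fin.last n) = ∑ t, δ t := by
  rw [Fin.partialSum, Fin.val_last, List.take_of_length_le (by simp), List.sum_ofFn]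

theorem Fin.sum_neg_castSucc_add_succ {G : Type*} [AddCommGroup G] {n : ℕ} (f : Fin (n + 1) → G) :
    ∑ t : Fin n, (-f t.castSucc + f t.succ) = -f 0 + f (Fin.last n) := by
  rw [← Fin.partialSum_last, ← congrFun (Fin.partialSum_left_neg f) (Fin.last n)]
  simp

def isPath18EquivSteps (n : ℕ) (p q : ℤ × ℤ × ℤ) :
    {f : Fin (n + 1) → ℤ × ℤ × ℤ // IsPath18 n f p q} ≃
      {δ : Fin n → ℤ × ℤ × ℤ // (∀ t, Adj18 0 (δ t)) ∧ ∑ t, δ t = -p + q} where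
  toFun f := ⟨fun t => -f.1 t.castSucc + f.1 t.succ,
    fun t => adj18_iff_adj18_zero_neg_add.1 (f.2.2.2 t),
    by rw [Fin.sum_neg_castSucc_add_succ, f.2.1, f.2.2.1]⟩
  invFun δ := ⟨fun s => p + Fin.partialSum δ.1 s, by
    refine ⟨by simp, by simp [Fin.partialSum_last, δ.2.2], fun t => ?_⟩
    simpa [adj18_iff_adj18_zero_neg_add, Fin.partialSum_succ] using δ.2.1 t⟩
  left_inv f := Subtype.ext (by
    conv_rhs => rw [← Fin.partialSum_left_neg f.1, f.2.1]
    rfl)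
  right_inv δ := Subtype.ext (funext fun t => by simp [Fin.partialSum_succ])

/-- The `(y, z)`-displacements of an 18-step that raises `x` by one, listed so that the letter
counts of a word come out as `a, b, k + a, j + b, i - j - k - 2(a + b)`, as in the formula. -/
def planarMove : Fin 5 → ℤ × ℤ := ![(0, -1), (-1, 0), (0, 1), (1, 0), (0, 0)]

theorem planarMove_injective : Function.Injective planarMove := by decide

theorem adj18_zero_iff_mem_range_planarMove {d : ℤ × ℤ × ℤ} (hd : d.1 = 1) :
    Adj18 0 d ↔ d.2 ∈ Set.range planarMove := by
  obtain ⟨x, y, z⟩ := d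
  simp only at hd
  subst hd
  simp only [Adj18, ne_eq, planarMove, Matrix.range_cons, Matrix.range_empty, Set.union_empty,
    Set.union_singleton, Set.union_insert, Set.mem_insert_iff, Set.mem_singleton_iff, Prod.ext_iff,
    Prod.fst_zero, Prod.snd_zero]
  omega

theorem fst_le_one_of_adj18_zero {d : ℤ × ℤ × ℤ} (h : Adj18 0 d) : d.1 ≤ 1 := by
  have := h.2.1
  rw [Prod.fst_zero, zero_sub, Int.natAbs_neg] at this
  omega

theorem fst_eq_one_of_sum_fst_eq {n : ℕ} {δ : Fin n → ℤ × ℤ × ℤ} (hδ : ∀ t, Adj18 0 (δ t))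
    (hsum : ∑ t, (δ t).1 = n) (t : Fin n) : (δ t).1 = 1 := by
  have hle : ∀ t ∈ univ, (δ t).1 ≤ 1 := fun t _ => fst_le_one_of_adj18_zero (hδ t)
  exact (sum_eq_sum_iff_of_le hle).1 (by simpa using hsum) t (mem_univ t)

theorem card_steps_eq_card_planarMove_words (n : ℕ) (v : ℤ × ℤ) :
    Nat.card {δ : Fin n → ℤ × ℤ × ℤ // (∀ t, Adj18 0 (δ t)) ∧ ∑ t, δ t = ((n : ℤ), v)} =
      Nat.card {c : Fin n → Fin 5 // ∑ t, planarMove (c t) = v} := by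
  symm
  refine Nat.card_eq_of_bijective
    (fun c => ⟨fun t => (1, planarMove (c.1 t)), fun t => ?_, ?_⟩) ⟨fun c c' hcc' => ?_, ?_⟩
  · exact (adj18_zero_iff_mem_range_planarMove rfl).2 (Set.mem_range_self _)
  · simp [Prod.ext_iff, Prod.fst_sum, Prod.snd_sum, c.2]
  · ext t : 2
    exact planarMove_injective (congrArg (fun δ => (δ.1 t).2) hcc')
  · rintro ⟨δ, hstep, hsum⟩
    have hfst : ∀ t, (δ t).1 = 1 :=
      fst_eq_one_of_sum_fst_eq hstep (by simpa [Prod.fst_sum] using congrArg Prod.fst hsum)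
    choose c hc using fun t => (adj18_zero_iff_mem_range_planarMove (hfst t)).1 (hstep t)
    refine ⟨⟨c, ?_⟩, Subtype.ext (funext fun t => Prod.ext (hfst t).symm (hc t))⟩
    simpa [hc, Prod.snd_sum] using congrArg Prod.snd hsum

theorem sum_planarMove {ι : Type*} [Fintype ι] (c : ι → Fin 5) :
    ∑ t, planarMove (c t) =
      ((fiberCard c 3 : ℤ) - fiberCard c 1, (fiberCard c 2 : ℤ) - fiberCard c 0) := by
  rw [sum_comp_eq_sum_nsmul_fiberCard, Fin.sum_univ_five]
  simp only [planarMove, Matrix.cons_val, Prod.smul_mk, Int.nsmul_eq_mul, Prod.mk_add_mk,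
    Prod.ext_iff]
  omega

theorem planarMove_sum_eq_and_fiberCard_eq_iff {i j k a b : ℕ} (h : j + k ≤ i)
    (c : Fin i → Fin 5) :
    (∑ t, planarMove (c t) = ((j : ℤ), (k : ℤ)) ∧ (fiberCard c 0, fiberCard c 1) = (a, b)) ↔
      2 * (a + b) ≤ i - j - k ∧ fiberCard c = ![a, b, k + a, j + b, i - j - k - 2 * (a + b)] := by
  have htotal := sum_fiberCard c
  rw [Fin.sum_univ_five, Fintype.card_fin] at htotal
  rw [sum_planarMove, funext_iff]
  simp only [Fin.forall_fin_succ, Matrix.cons_val, Fin.succ_zero_eq_one, Fin.succ_one_eq_two,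
    Fin.reduceSucc, IsEmpty.forall_iff, and_true, Prod.ext_iff]
  omega

theorem card_planarMove_words {i j k : ℕ} (h : j + k ≤ i) :
    Nat.card {c : Fin i → Fin 5 // ∑ t, planarMove (c t) = ((j : ℤ), (k : ℤ))} =
      ∑ a ∈ range (i + 1), ∑ b ∈ range (i + 1),
        if 2 * (a + b) ≤ i - j - k then
          Nat.multinomial univ ![a, b, k + a, j + b, i - j - k - 2 * (a + b)]
        else 0 := by
  have hmaps : ∀ c ∈ ({c | ∑ t, planarMove (c t) = ((j : ℤ), (k : ℤ))} : Finset (Fin i → Fin 5)),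
      (fiberCard c 0, fiberCard c 1) ∈ range (i + 1) ×ˢ range (i + 1) := by
    intro c _
    have hle : ∀ x, fiberCard c x ≤ i := fun x =>
      (card_filter_le _ _).trans_eq (card_fin i)
    simpa [Nat.lt_succ_iff] using ⟨hle 0, hle 1⟩
  rw [Nat.card_eq_fintype_card, Fintype.card_subtype, card_eq_sum_card_fiberwise hmaps,
    sum_product]
  refine sum_congr rfl fun a _ => sum_congr rfl fun b _ => ?_
  simp_rw [filter_filter, planarMove_sum_eq_and_fiberCard_eq_iff h]
  split_ifs with hab
  · have hsum : ∑ x, ![a, b, k + a, j + b, i - j - k - 2 * (a + b)] x = i := by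
      simp only [Fin.sum_univ_five, Matrix.cons_val]
      omega
    rw [← card_fiberCard_eq_multinomial _ hsum, Nat.card_eq_fintype_card, Fintype.card_subtype]
    simp [hab]
  · simp [hab]

/-- If `i ≥ j + k`, the 18-distance from the origin to `(i,j,k)` is `i`, and the number of
shortest 18-neighbor paths equals
`∑_{a,b ≥ 0, 2(a+b) ≤ i−j−k} i!/(a!·b!·(k+a)!·(j+b)!·(i−j−k−2(a+b))!)`. -/
theorem count_shortest_paths_18N_case1 (i j k : ℕ) (h : j + k ≤ i) :
    Nat.card {f : Fin (i + 1) → ℤ × ℤ × ℤ //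
        IsPath18 i f (0, 0, 0) ((i : ℤ), (j : ℤ), (k : ℤ))} =
      ∑ a ∈ Finset.range (i + 1), ∑ b ∈ Finset.range (i + 1),
        if 2 * (a + b) ≤ i - j - k then
          Nat.factorial i /
            (Nat.factorial a * Nat.factorial b * Nat.factorial (k + a) *
              Nat.factorial (j + b) * Nat.factorial (i - j - k - 2 * (a + b)))
        else 0 := by
  rw [Nat.card_congr (isPath18EquivSteps i _ _), Prod.mk_zero_zero, Prod.mk_zero_zero, neg_zero,
    zero_add, card_steps_eq_card_planarMove_words, card_planarMove_words h]
  refine sum_congr rfl fun a _ => sum_congr rfl fun b _ => ?_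
  split_ifs with hab
  · rw [Nat.multinomial, Fin.sum_univ_five, Fin.prod_univ_five]
    simp only [Matrix.cons_val]
    congr 2
    omega
  · rfl
end

section
/- Let i,j,k ≥ 0 with i+j+k odd, and suppose L = (i+j+k+1)/2 satisfies L ≥ max(i,j,k) (so the 18-neighbor distance from the origin to (i,j,k) is L). Then the number of shortest 18-neighbor paths from (0,0,0) to (i,j,k) equals L!·((L−i)(L−j) + (L−j)(L−k) + (L−k)(L−i)) / ((L−i)!·(L−j)!·(L−k)!). -/
open Finset

/-! ### Generic counting lemma: number of functions with prescribed fiber sizes -/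

lemma finite_count_subtype {α : Type*} {β : Type*} [Finite β] (s : Finset α)
    (P : (β → α) → Prop) :
    Finite {g : β → α // (∀ x, g x ∈ s) ∧ P g} := by
  apply Finite.of_injective (fun g : {g : β → α // (∀ x, g x ∈ s) ∧ P g} =>
    (fun x => (⟨g.1 x, g.2.1 x⟩ : {y // y ∈ s})))
  intro g g' h
  apply Subtype.ext
  funext x
  exact congrArg Subtype.val (congrFun h x)

lemma nat_card_sigma {ι : Type*} [Fintype ι] (A : ι → Type*) [∀ i, Finite (A i)] :
    Nat.card (Σ i, A i) = ∑ i, Nat.card (A i) := by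
  classical
  letI : ∀ i, Fintype (A i) := fun i => Fintype.ofFinite _
  simp [Nat.card_eq_fintype_card]

lemma card_count {α : Type*} [DecidableEq α] {β : Type*} [Fintype β] [DecidableEq β]
    (s : Finset α) (c : α → ℕ)
    (hs : ∑ a ∈ s, c a = Fintype.card β) :
    Nat.card {g : β → α // (∀ x, g x ∈ s) ∧
        ∀ a ∈ s, (univ.filter fun x => g x = a).card = c a}
      * ∏ a ∈ s, (c a).factorial = (Fintype.card β).factorial := by
  induction s using Finset.induction generalizing β with
  | empty =>
    simp only [Finset.sum_empty] at hs
    haveI : IsEmpty β := Fintype.card_eq_zero_iff.mp hs.symm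
    haveI : Unique {g : β → α // (∀ x, g x ∈ (∅ : Finset α)) ∧
        ∀ a ∈ (∅ : Finset α), (univ.filter fun x => g x = a).card = c a} :=
      ⟨⟨⟨fun x => isEmptyElim x, fun x => isEmptyElim x, fun a ha => absurd ha (notMem_empty a)⟩⟩,
        fun g => Subtype.ext (funext fun x => isEmptyElim x)⟩
    rw [Nat.card_unique, ← hs]
    simp
  | @insert a s₀ ha IH =>
    classical
    rw [Finset.sum_insert ha] at hs
    set n := Fintype.card β with hn
    clear_value n
    have hca : c a ≤ n := by omega
    haveI : ∀ F : {F : Finset β // F.card = c a}, Finite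
        {g : {x : β // x ∉ F.1} → α // (∀ x, g x ∈ s₀) ∧
          ∀ b ∈ s₀, (univ.filter fun x => g x = b).card = c b} :=
      fun F => finite_count_subtype s₀ _
    have hcard : ∀ F : {F : Finset β // F.card = c a},
        Nat.card {g : {x : β // x ∉ F.1} → α // (∀ x, g x ∈ s₀) ∧
          ∀ b ∈ s₀, (univ.filter fun x => g x = b).card = c b}
          * ∏ b ∈ s₀, (c b).factorial = (n - c a).factorial := by
      intro F
      have h1 : Fintype.card {x : β // x ∉ F.1} = n - c a := by
        rw [Fintype.card_subtype_compl]
        simp [F.2, hn]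
      have h2 := IH (show ∑ b ∈ s₀, c b = Fintype.card {x : β // x ∉ F.1} by rw [h1]; omega)
      rw [h1] at h2
      exact h2
    set Sig := Σ F : {F : Finset β // F.card = c a},
      {g : {x : β // x ∉ F.1} → α // (∀ x, g x ∈ s₀) ∧
        ∀ b ∈ s₀, (univ.filter fun x => g x = b).card = c b} with hSig
    set G : Sig → (β → α) := fun p x => if h : x ∈ p.1.1 then a else p.2.1 ⟨x, h⟩ with hG
    have hGmem : ∀ p x, G p x ∈ insert a s₀ := by
      intro p x
      by_cases h : x ∈ p.1.1
      · simp [hG, h]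
      · simp only [hG, dif_neg h]
        exact mem_insert_of_mem (p.2.2.1 _)
    have hGne : ∀ p x, x ∉ p.1.1 → G p x ≠ a := by
      intro p x h hx
      simp only [hG, dif_neg h] at hx
      exact ha (hx ▸ p.2.2.1 ⟨x, h⟩)
    have hGfa : ∀ p, (univ.filter fun x => G p x = a) = p.1.1 := by
      intro p
      ext x
      simp only [mem_filter, mem_univ, true_and]
      constructor
      · intro hx
        by_contra h
        exact hGne p x h hx
      · intro h
        simp [hG, h]
    have hGfb : ∀ p, ∀ b ∈ s₀, (univ.filter fun x => G p x = b).card = c b := by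
      intro p b hb
      have hba : b ≠ a := fun h => ha (h ▸ hb)
      rw [← p.2.2.2 b hb]
      refine Finset.card_bij' (fun x hx => (⟨x, fun hmem => ?_⟩ : {x : β // x ∉ p.1.1}))
        (fun y _ => y.1) ?_ ?_ (fun x hx => rfl) (fun y hy => rfl)
      · simp only [mem_filter, mem_univ, true_and] at hx
        exact hba (by simpa [hG, hmem] using hx.symm)
      · intro x hx
        simp only [mem_filter, mem_univ, true_and] at hx ⊢
        have hxm : x ∉ p.1.1 := fun hmem => hba (by simpa [hG, hmem] using hx.symm)
        simpa [hG, dif_neg hxm] using hx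
      · intro y hy
        simp only [mem_filter, mem_univ, true_and] at hy ⊢
        simp [hG, dif_neg y.2, hy]
    have key : Nat.card Sig = Nat.card {g : β → α // (∀ x, g x ∈ insert a s₀) ∧
        ∀ b ∈ insert a s₀, (univ.filter fun x => g x = b).card = c b} := by
      apply Nat.card_eq_of_bijective (f := fun p => ⟨G p, hGmem p, by
        intro b hb
        rcases Finset.mem_insert.mp hb with rfl | hb
        · rw [hGfa]; exact p.1.2
        · exact hGfb p b hb⟩)
      constructor
      · rintro ⟨F1, g1⟩ ⟨F2, g2⟩ h
        have hGG : G ⟨F1, g1⟩ = G ⟨F2, g2⟩ := congrArg Subtype.val h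
        have hFF : F1 = F2 := by
          apply Subtype.ext
          have e1 := hGfa ⟨F1, g1⟩
          have e2 := hGfa ⟨F2, g2⟩
          rw [hGG] at e1
          exact e1.symm.trans e2
        cases hFF
        refine congrArg (Sigma.mk F1) (Subtype.ext (funext fun x => ?_))
        have := congrFun hGG x.1
        simpa [hG, dif_neg x.2] using this
      · rintro ⟨g, hmem, hcount⟩
        refine ⟨⟨⟨univ.filter fun x => g x = a, hcount a (mem_insert_self a s₀)⟩,
          ⟨fun x => g x.1, ?_, ?_⟩⟩, ?_⟩
        · intro x
          rcases Finset.mem_insert.mp (hmem x.1) with h | h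
          · exact absurd (by simpa using h) (by simpa using x.2)
          · exact h
        · intro b hb
          have hba : b ≠ a := fun h => ha (h ▸ hb)
          rw [← hcount b (mem_insert_of_mem hb)]
          refine Finset.card_bij' (fun y _ => y.1) (fun x hx => ⟨x, by
              simp only [mem_filter, mem_univ, true_and] at hx
              simp [hx, hba]⟩) ?_ ?_ (fun y hy => rfl) (fun x hx => rfl)
          · intro y hy
            simp only [mem_filter, mem_univ, true_and] at hy ⊢
            exact hy
          · intro x hx
            simp only [mem_filter, mem_univ, true_and] at hx ⊢
            exact hx
        · apply Subtype.ext
          funext x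
          by_cases h : g x = a
          · simp [hG, h]
          · simp [hG, h]
    have hSigCard : Nat.card Sig * ∏ b ∈ s₀, (c b).factorial =
        n.choose (c a) * (n - c a).factorial := by
      rw [hSig, nat_card_sigma, Finset.sum_mul]
      rw [Finset.sum_congr rfl (fun F _ => hcard F)]
      rw [Finset.sum_const, Finset.card_univ, smul_eq_mul]
      congr 1
      rw [Fintype.card_finset_len, ← hn]
    rw [← key, Finset.prod_insert ha, ← mul_assoc, mul_comm (Nat.card Sig) (c a).factorial,
      mul_assoc, hSigCard]
    rw [show (c a).factorial * (n.choose (c a) * (n - c a).factorial)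
        = n.choose (c a) * (c a).factorial * (n - c a).factorial by ring]
    exact Nat.choose_mul_factorial_mul_factorial hca

/-! ### Steps and paths -/

/-- The six step vectors available for a shortest 18-neighbor path with odd coordinate sum. -/
def D6 : Finset (ℤ × ℤ × ℤ) := {(1,0,0), (0,1,0), (0,0,1), (0,1,1), (1,0,1), (1,1,0)}

lemma sum_D6 {M : Type*} [AddCommMonoid M] (f : ℤ × ℤ × ℤ → M) :
    ∑ y ∈ D6, f y = f (1,0,0) + (f (0,1,0) + (f (0,0,1) +
      (f (0,1,1) + (f (1,0,1) + f (1,1,0))))) := by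
  rw [show D6 = insert (1,0,0) (insert (0,1,0) (insert (0,0,1) (insert (0,1,1)
    (insert (1,0,1) {(1,1,0)})))) from rfl]
  rw [Finset.sum_insert (by decide), Finset.sum_insert (by decide),
    Finset.sum_insert (by decide), Finset.sum_insert (by decide),
    Finset.sum_insert (by decide), Finset.sum_singleton]

lemma prod_D6 {M : Type*} [CommMonoid M] (f : ℤ × ℤ × ℤ → M) :
    ∏ y ∈ D6, f y = f (1,0,0) * (f (0,1,0) * (f (0,0,1) *
      (f (0,1,1) * (f (1,0,1) * f (1,1,0))))) := by
  rw [show D6 = insert (1,0,0) (insert (0,1,0) (insert (0,0,1) (insert (0,1,1)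
    (insert (1,0,1) {(1,1,0)})))) from rfl]
  rw [Finset.prod_insert (by decide), Finset.prod_insert (by decide),
    Finset.prod_insert (by decide), Finset.prod_insert (by decide),
    Finset.prod_insert (by decide), Finset.prod_singleton]

lemma adj_sub (p q : ℤ × ℤ × ℤ) : Adj18 p q ↔ Adj18 0 (q - p) := by
  obtain ⟨px, py, pz⟩ := p
  obtain ⟨qx, qy, qz⟩ := q
  simp only [Adj18, Prod.mk_sub_mk, ne_eq, Prod.mk.injEq, Prod.fst_zero, Prod.snd_zero,
    not_and, Prod.ext_iff]
  constructor
  · rintro ⟨h0, h1, h2, h3, h4⟩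
    refine ⟨?_, by omega, by omega, by omega, by omega⟩
    intro h
    omega
  · rintro ⟨h0, h1, h2, h3, h4⟩
    refine ⟨?_, by omega, by omega, by omega, by omega⟩
    intro h
    omega

lemma step_sum_le (u : ℤ × ℤ × ℤ) (h : Adj18 0 u) : u.1 + u.2.1 + u.2.2 ≤ 2 := by
  obtain ⟨x, y, z⟩ := u
  obtain ⟨h0, h1, h2, h3, h4⟩ := h
  simp at h1 h2 h3 h4 ⊢
  omega

lemma step_mem2 (u : ℤ × ℤ × ℤ) (h : Adj18 0 u) (hs : u.1 + u.2.1 + u.2.2 = 2) :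
    u = (0,1,1) ∨ u = (1,0,1) ∨ u = (1,1,0) := by
  obtain ⟨x, y, z⟩ := u
  obtain ⟨h0, h1, h2, h3, h4⟩ := h
  simp at h1 h2 h3 h4 hs
  simp only [Prod.mk.injEq]
  omega

lemma step_mem1 (u : ℤ × ℤ × ℤ) (h : Adj18 0 u) (hs : u.1 + u.2.1 + u.2.2 = 1) :
    u = (1,0,0) ∨ u = (0,1,0) ∨ u = (0,0,1) := by
  obtain ⟨x, y, z⟩ := u
  obtain ⟨h0, h1, h2, h3, h4⟩ := h
  simp at h1 h2 h3 h4 hs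
  simp only [Prod.mk.injEq]
  omega

lemma D6_adj : ∀ y ∈ D6, Adj18 0 y := by
  intro y hy
  fin_cases hy <;> exact ⟨by decide, by decide, by decide, by decide, by decide⟩

/-- partial sums of a step sequence -/
def pathOf (L : ℕ) (d : Fin L → ℤ × ℤ × ℤ) : Fin (L + 1) → ℤ × ℤ × ℤ :=
  fun t => ∑ s : Fin L, if (s : ℕ) < (t : ℕ) then d s else 0

lemma pathOf_zero (L : ℕ) (d : Fin L → ℤ × ℤ × ℤ) : pathOf L d 0 = 0 := by
  simp [pathOf]

lemma pathOf_last (L : ℕ) (d : Fin L → ℤ × ℤ × ℤ) :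
    pathOf L d (Fin.last L) = ∑ s, d s := by
  simp [pathOf, Fin.is_lt]

lemma pathOf_diff (L : ℕ) (d : Fin L → ℤ × ℤ × ℤ) (t : Fin L) :
    pathOf L d t.succ - pathOf L d t.castSucc = d t := by
  simp only [pathOf]
  rw [← Finset.sum_sub_distrib]
  have hpt : ∀ s : Fin L, ((if (s : ℕ) < (t.succ : ℕ) then d s else 0)
      - (if (s : ℕ) < (t.castSucc : ℕ) then d s else 0)) = if s = t then d s else 0 := by
    intro s
    simp only [Fin.val_succ, Fin.coe_castSucc]
    by_cases hst : s = t
    · subst hst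
      simp
    · have hv : (s : ℕ) ≠ (t : ℕ) := fun h => hst (Fin.ext h)
      by_cases h2 : (s : ℕ) < (t : ℕ)
      · have h3 : (s : ℕ) < (t : ℕ) + 1 := by omega
        simp [h2, h3, hst]
      · have h3 : ¬ (s : ℕ) < (t : ℕ) + 1 := by omega
        simp [h2, h3, hst]
  rw [Finset.sum_congr rfl (fun s _ => hpt s), Finset.sum_ite_eq' univ t d]
  simp

lemma pathOf_partial (L : ℕ) (d : Fin L → ℤ × ℤ × ℤ) (f : Fin (L + 1) → ℤ × ℤ × ℤ)
    (hd : ∀ t : Fin L, f t.succ - f t.castSucc = d t) :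
    ∀ t, pathOf L d t = f t - f 0 := by
  suffices H : ∀ m (h : m < L + 1), pathOf L d ⟨m, h⟩ = f ⟨m, h⟩ - f 0 by
    intro t
    have := H t.1 t.2
    simpa using this
  intro m
  induction m with
  | zero =>
    intro h
    have h0 : (⟨0, h⟩ : Fin (L + 1)) = 0 := rfl
    rw [h0, pathOf_zero, sub_self]
  | succ m ih =>
    intro h
    have hm : m < L := by omega
    have hm1 : m < L + 1 := by omega
    have key : pathOf L d ⟨m + 1, h⟩ = pathOf L d ⟨m, hm1⟩ + d ⟨m, hm⟩ := by
      simp only [pathOf]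
      have hpt : ∀ s : Fin L, (if (s : ℕ) < m + 1 then d s else 0)
          = (if (s : ℕ) < m then d s else 0) + (if s = ⟨m, hm⟩ then d s else 0) := by
        intro s
        by_cases hst : s = (⟨m, hm⟩ : Fin L)
        · subst hst
          simp
        · have hv : (s : ℕ) ≠ m := fun hh => hst (Fin.ext hh)
          by_cases h2 : (s : ℕ) < m
          · have h3 : (s : ℕ) < m + 1 := by omega
            simp [h2, h3, hst]
          · have h3 : ¬ (s : ℕ) < m + 1 := by omega
            simp [h2, h3, hst]
      rw [Finset.sum_congr rfl (fun s _ => hpt s), Finset.sum_add_distrib]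
      congr 1
      rw [Finset.sum_ite_eq' univ (⟨m, hm⟩ : Fin L) d]
      simp
    rw [key, ih hm1, ← hd ⟨m, hm⟩]
    have e1 : (⟨m, hm⟩ : Fin L).succ = ⟨m + 1, h⟩ := rfl
    have e2 : (⟨m, hm⟩ : Fin L).castSucc = ⟨m, hm1⟩ := rfl
    rw [e1, e2]
    abel

lemma smul_eval (c : ℕ) (x y z : ℤ) :
    c • ((x, y, z) : ℤ × ℤ × ℤ) = ((c : ℤ) * x, (c : ℤ) * y, (c : ℤ) * z) := by
  rw [Prod.smul_mk, Prod.smul_mk, nsmul_eq_mul, nsmul_eq_mul, nsmul_eq_mul]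

lemma sum_fiber_eq (L : ℕ) (d : Fin L → ℤ × ℤ × ℤ) (hmem : ∀ t, d t ∈ D6) :
    ∑ t, d t = ∑ y ∈ D6, ((univ.filter fun t => d t = y).card) • y := by
  rw [← Finset.sum_fiberwise_of_maps_to (fun x _ => hmem x) d]
  refine Finset.sum_congr rfl fun y _ => ?_
  rw [Finset.sum_congr rfl (fun t ht => (Finset.mem_filter.mp ht).2), Finset.sum_const]

lemma count_total (L : ℕ) (d : Fin L → ℤ × ℤ × ℤ) (hmem : ∀ t, d t ∈ D6) :
    ∑ y ∈ D6, (univ.filter fun t => d t = y).card = L := by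
  have := Finset.card_eq_sum_card_fiberwise (f := d) (s := univ) (t := D6) (fun x _ => hmem x)
  simpa using this.symm

lemma eval_sum_D6 (c : ℤ × ℤ × ℤ → ℕ) :
    ∑ y ∈ D6, ((c y) • y) = ((c (1,0,0) : ℤ) + c (1,0,1) + c (1,1,0),
      (c (0,1,0) : ℤ) + c (0,1,1) + c (1,1,0),
      (c (0,0,1) : ℤ) + c (0,1,1) + c (1,0,1)) := by
  rw [sum_D6 (fun y => c y • y)]
  simp only [smul_eval, mul_one, mul_zero, Prod.mk_add_mk]
  refine Prod.ext ?_ (Prod.ext ?_ ?_) <;> simp <;> ring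

/-! ### The three count functions -/

def cA (i j k L : ℕ) : ℤ × ℤ × ℤ → ℕ := fun y =>
  if y = (1,0,0) then 1 else if y = (0,1,1) then L - i
  else if y = (1,0,1) then L - j - 1 else if y = (1,1,0) then L - k - 1 else 0

def cB (i j k L : ℕ) : ℤ × ℤ × ℤ → ℕ := fun y =>
  if y = (0,1,0) then 1 else if y = (0,1,1) then L - i - 1
  else if y = (1,0,1) then L - j else if y = (1,1,0) then L - k - 1 else 0

def cC (i j k L : ℕ) : ℤ × ℤ × ℤ → ℕ := fun y =>
  if y = (0,0,1) then 1 else if y = (0,1,1) then L - i - 1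
  else if y = (1,0,1) then L - j - 1 else if y = (1,1,0) then L - k else 0

variable {i j k L : ℕ}

@[simp] lemma cA1 : cA i j k L (1,0,0) = 1 := by simp [cA, Prod.ext_iff]
@[simp] lemma cA2 : cA i j k L (0,1,0) = 0 := by simp [cA, Prod.ext_iff]
@[simp] lemma cA3 : cA i j k L (0,0,1) = 0 := by simp [cA, Prod.ext_iff]
@[simp] lemma cA4 : cA i j k L (0,1,1) = L - i := by simp [cA, Prod.ext_iff]
@[simp] lemma cA5 : cA i j k L (1,0,1) = L - j - 1 := by simp [cA, Prod.ext_iff]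
@[simp] lemma cA6 : cA i j k L (1,1,0) = L - k - 1 := by simp [cA, Prod.ext_iff]
@[simp] lemma cB1 : cB i j k L (1,0,0) = 0 := by simp [cB, Prod.ext_iff]
@[simp] lemma cB2 : cB i j k L (0,1,0) = 1 := by simp [cB, Prod.ext_iff]
@[simp] lemma cB3 : cB i j k L (0,0,1) = 0 := by simp [cB, Prod.ext_iff]
@[simp] lemma cB4 : cB i j k L (0,1,1) = L - i - 1 := by simp [cB, Prod.ext_iff]
@[simp] lemma cB5 : cB i j k L (1,0,1) = L - j := by simp [cB, Prod.ext_iff]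
@[simp] lemma cB6 : cB i j k L (1,1,0) = L - k - 1 := by simp [cB, Prod.ext_iff]
@[simp] lemma cC1 : cC i j k L (1,0,0) = 0 := by simp [cC, Prod.ext_iff]
@[simp] lemma cC2 : cC i j k L (0,1,0) = 0 := by simp [cC, Prod.ext_iff]
@[simp] lemma cC3 : cC i j k L (0,0,1) = 1 := by simp [cC, Prod.ext_iff]
@[simp] lemma cC4 : cC i j k L (0,1,1) = L - i - 1 := by simp [cC, Prod.ext_iff]
@[simp] lemma cC5 : cC i j k L (1,0,1) = L - j - 1 := by simp [cC, Prod.ext_iff]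
@[simp] lemma cC6 : cC i j k L (1,1,0) = L - k := by simp [cC, Prod.ext_iff]

/-- from count conditions derive the total and the sum -/
lemma sum_of_counts (c : ℤ × ℤ × ℤ → ℕ) {L : ℕ} (d : Fin L → ℤ × ℤ × ℤ)
    (hmem : ∀ t, d t ∈ D6)
    (hcount : ∀ y ∈ D6, (univ.filter fun t => d t = y).card = c y) :
    ∑ y ∈ D6, c y = L ∧ ∑ t, d t = ((c (1,0,0) : ℤ) + c (1,0,1) + c (1,1,0),
      (c (0,1,0) : ℤ) + c (0,1,1) + c (1,1,0),
      (c (0,0,1) : ℤ) + c (0,1,1) + c (1,0,1)) := by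
  constructor
  · rw [← Finset.sum_congr rfl hcount]
    exact count_total L d hmem
  · rw [sum_fiber_eq L d hmem, Finset.sum_congr rfl (fun y hy => by rw [hcount y hy]),
      eval_sum_D6]

/-- Splitting shortest step sequences into three classes according to the unit step. -/
lemma card_split (i j k L : ℕ)
    (hL : i + j + k + 1 = 2 * L) (hi : i ≤ L) (hj : j ≤ L) (hk : k ≤ L) :
    Nat.card {d : Fin L → ℤ × ℤ × ℤ // (∀ t, d t ∈ D6) ∧
        ∀ y ∈ D6, (univ.filter fun t => d t = y).card = cA i j k L y}
      + Nat.card {d : Fin L → ℤ × ℤ × ℤ // (∀ t, d t ∈ D6) ∧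
        ∀ y ∈ D6, (univ.filter fun t => d t = y).card = cB i j k L y}
      + Nat.card {d : Fin L → ℤ × ℤ × ℤ // (∀ t, d t ∈ D6) ∧
        ∀ y ∈ D6, (univ.filter fun t => d t = y).card = cC i j k L y}
      = Nat.card {d : Fin L → ℤ × ℤ × ℤ // (∀ t, Adj18 0 (d t)) ∧
        ∑ t, d t = ((i : ℤ), (j : ℤ), (k : ℤ))} := by
  classical
  haveI : Finite {d : Fin L → ℤ × ℤ × ℤ // (∀ t, d t ∈ D6) ∧
      ∀ y ∈ D6, (univ.filter fun t => d t = y).card = cA i j k L y} := finite_count_subtype D6 _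
  haveI : Finite {d : Fin L → ℤ × ℤ × ℤ // (∀ t, d t ∈ D6) ∧
      ∀ y ∈ D6, (univ.filter fun t => d t = y).card = cB i j k L y} := finite_count_subtype D6 _
  haveI : Finite {d : Fin L → ℤ × ℤ × ℤ // (∀ t, d t ∈ D6) ∧
      ∀ y ∈ D6, (univ.filter fun t => d t = y).card = cC i j k L y} := finite_count_subtype D6 _
  rw [← Nat.card_sum, ← Nat.card_sum]
  have mkA : ∀ d : {d : Fin L → ℤ × ℤ × ℤ // (∀ t, d t ∈ D6) ∧
      ∀ y ∈ D6, (univ.filter fun t => d t = y).card = cA i j k L y},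
      ∑ t, d.1 t = ((i : ℤ), (j : ℤ), (k : ℤ)) := by
    intro d
    obtain ⟨htot, hsum⟩ := sum_of_counts (cA i j k L) d.1 d.2.1 d.2.2
    rw [sum_D6] at htot
    simp only [cA1, cA2, cA3, cA4, cA5, cA6] at htot hsum
    rw [hsum]
    simp only [Prod.mk.injEq]
    refine ⟨by omega, by omega, by omega⟩
  have mkB : ∀ d : {d : Fin L → ℤ × ℤ × ℤ // (∀ t, d t ∈ D6) ∧
      ∀ y ∈ D6, (univ.filter fun t => d t = y).card = cB i j k L y},
      ∑ t, d.1 t = ((i : ℤ), (j : ℤ), (k : ℤ)) := by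
    intro d
    obtain ⟨htot, hsum⟩ := sum_of_counts (cB i j k L) d.1 d.2.1 d.2.2
    rw [sum_D6] at htot
    simp only [cB1, cB2, cB3, cB4, cB5, cB6] at htot hsum
    rw [hsum]
    simp only [Prod.mk.injEq]
    refine ⟨by omega, by omega, by omega⟩
  have mkC : ∀ d : {d : Fin L → ℤ × ℤ × ℤ // (∀ t, d t ∈ D6) ∧
      ∀ y ∈ D6, (univ.filter fun t => d t = y).card = cC i j k L y},
      ∑ t, d.1 t = ((i : ℤ), (j : ℤ), (k : ℤ)) := by
    intro d
    obtain ⟨htot, hsum⟩ := sum_of_counts (cC i j k L) d.1 d.2.1 d.2.2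
    rw [sum_D6] at htot
    simp only [cC1, cC2, cC3, cC4, cC5, cC6] at htot hsum
    rw [hsum]
    simp only [Prod.mk.injEq]
    refine ⟨by omega, by omega, by omega⟩
  apply Nat.card_eq_of_bijective (f := fun p => match p with
    | Sum.inl (Sum.inl d) => ⟨d.1, fun t => D6_adj _ (d.2.1 t), mkA d⟩
    | Sum.inl (Sum.inr d) => ⟨d.1, fun t => D6_adj _ (d.2.1 t), mkB d⟩
    | Sum.inr d => ⟨d.1, fun t => D6_adj _ (d.2.1 t), mkC d⟩)
  constructor
  · rintro ((⟨d, hd⟩ | ⟨d, hd⟩) | ⟨d, hd⟩) ((⟨d', hd'⟩ | ⟨d', hd'⟩) | ⟨d', hd'⟩) h <;>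
      have hdd : d = d' := congrArg Subtype.val h
    · subst hdd; rfl
    · exfalso
      have e1 := hd.2 (1,0,0) (by decide)
      have e2 := hd'.2 (1,0,0) (by decide)
      rw [hdd] at e1
      rw [e1, cA1, cB1] at e2
      exact one_ne_zero e2
    · exfalso
      have e1 := hd.2 (1,0,0) (by decide)
      have e2 := hd'.2 (1,0,0) (by decide)
      rw [hdd] at e1
      rw [e1, cA1, cC1] at e2
      exact one_ne_zero e2
    · exfalso
      have e1 := hd.2 (0,1,0) (by decide)
      have e2 := hd'.2 (0,1,0) (by decide)
      rw [hdd] at e1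
      rw [e1, cB2, cA2] at e2
      exact one_ne_zero e2
    · subst hdd; rfl
    · exfalso
      have e1 := hd.2 (0,1,0) (by decide)
      have e2 := hd'.2 (0,1,0) (by decide)
      rw [hdd] at e1
      rw [e1, cB2, cC2] at e2
      exact one_ne_zero e2
    · exfalso
      have e1 := hd.2 (0,0,1) (by decide)
      have e2 := hd'.2 (0,0,1) (by decide)
      rw [hdd] at e1
      rw [e1, cC3, cA3] at e2
      exact one_ne_zero e2
    · exfalso
      have e1 := hd.2 (0,0,1) (by decide)
      have e2 := hd'.2 (0,0,1) (by decide)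
      rw [hdd] at e1
      rw [e1, cC3, cB3] at e2
      exact one_ne_zero e2
    · subst hdd; rfl
  · rintro ⟨d, hadj, hsum⟩
    have hσle : ∀ t, (d t).1 + (d t).2.1 + (d t).2.2 ≤ 2 := fun t => step_sum_le _ (hadj t)
    have hσsum : ∑ t, ((d t).1 + (d t).2.1 + (d t).2.2) = 2 * (L : ℤ) - 1 := by
      have h1 : (∑ t, d t).1 = (i : ℤ) := by rw [hsum]
      have h2 : (∑ t, d t).2.1 = (j : ℤ) := by rw [hsum]
      have h3 : (∑ t, d t).2.2 = (k : ℤ) := by rw [hsum]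
      rw [Prod.fst_sum] at h1
      rw [Prod.snd_sum, Prod.fst_sum] at h2
      rw [Prod.snd_sum, Prod.snd_sum] at h3
      rw [Finset.sum_add_distrib, Finset.sum_add_distrib, h1, h2, h3]
      omega
    have hσ : ∀ t, (d t).1 + (d t).2.1 + (d t).2.2 = 1 ∨
        (d t).1 + (d t).2.1 + (d t).2.2 = 2 := by
      intro t
      have hnn : ∀ s : Fin L, s ∈ univ → (0 : ℤ) ≤ 2 - ((d s).1 + (d s).2.1 + (d s).2.2) := by
        intro s _
        have := hσle s
        omega
      have hle : (2 - ((d t).1 + (d t).2.1 + (d t).2.2)) ≤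
          ∑ s, (2 - ((d s).1 + (d s).2.1 + (d s).2.2)) :=
        Finset.single_le_sum (f := fun s => 2 - ((d s).1 + (d s).2.1 + (d s).2.2))
          hnn (mem_univ t)
      rw [Finset.sum_sub_distrib, hσsum, Finset.sum_const, Finset.card_univ,
        Fintype.card_fin, nsmul_eq_mul] at hle
      have := hσle t
      omega
    have hmem : ∀ t, d t ∈ D6 := by
      intro t
      rcases hσ t with h | h
      · rcases step_mem1 _ (hadj t) h with h' | h' | h' <;> rw [h'] <;> decide
      · rcases step_mem2 _ (hadj t) h with h' | h' | h' <;> rw [h'] <;> decide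
    have htot : ∑ y ∈ D6, (univ.filter fun t => d t = y).card = L := count_total L d hmem
    have hcompv : ∑ t, d t =
        ∑ y ∈ D6, ((univ.filter fun t => d t = y).card) • y := sum_fiber_eq L d hmem
    rw [hsum, eval_sum_D6 (fun y => (univ.filter fun t => d t = y).card)] at hcompv
    rw [sum_D6] at htot
    simp only [Prod.mk.injEq] at hcompv
    obtain ⟨e1, e2, e3⟩ := hcompv
    have hcases : ((univ.filter fun t => d t = (1,0,0)).card = 1
          ∧ (univ.filter fun t => d t = (0,1,0)).card = 0
          ∧ (univ.filter fun t => d t = (0,0,1)).card = 0) ∨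
        ((univ.filter fun t => d t = (0,1,0)).card = 1
          ∧ (univ.filter fun t => d t = (1,0,0)).card = 0
          ∧ (univ.filter fun t => d t = (0,0,1)).card = 0) ∨
        ((univ.filter fun t => d t = (0,0,1)).card = 1
          ∧ (univ.filter fun t => d t = (1,0,0)).card = 0
          ∧ (univ.filter fun t => d t = (0,1,0)).card = 0) := by omega
    rcases hcases with ⟨ha1, ha2, ha3⟩ | ⟨ha1, ha2, ha3⟩ | ⟨ha1, ha2, ha3⟩
    · refine ⟨Sum.inl (Sum.inl ⟨d, hmem, ?_⟩), by apply Subtype.ext; rfl⟩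
      intro y hy
      fin_cases hy <;> simp only [cA1, cA2, cA3, cA4, cA5, cA6] <;> omega
    · refine ⟨Sum.inl (Sum.inr ⟨d, hmem, ?_⟩), by apply Subtype.ext; rfl⟩
      intro y hy
      fin_cases hy <;> simp only [cB1, cB2, cB3, cB4, cB5, cB6] <;> omega
    · refine ⟨Sum.inr ⟨d, hmem, ?_⟩, by apply Subtype.ext; rfl⟩
      intro y hy
      fin_cases hy <;> simp only [cC1, cC2, cC3, cC4, cC5, cC6] <;> omega

lemma cardA_eq (i j k L : ℕ)
    (hL : i + j + k + 1 = 2 * L) (hi : i ≤ L) (hj : j ≤ L) (hk : k ≤ L) :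
    Nat.card {d : Fin L → ℤ × ℤ × ℤ // (∀ t, d t ∈ D6) ∧
      ∀ y ∈ D6, (univ.filter fun t => d t = y).card = cA i j k L y}
      * (Nat.factorial (L - i) * Nat.factorial (L - j) * Nat.factorial (L - k))
      = Nat.factorial L * ((L - j) * (L - k)) := by
  classical
  by_cases hfs : j + 1 ≤ L ∧ k + 1 ≤ L
  · obtain ⟨B', hB'⟩ : ∃ b, L - j = b + 1 := ⟨L - j - 1, by omega⟩
    obtain ⟨C', hC'⟩ : ∃ c, L - k = c + 1 := ⟨L - k - 1, by omega⟩
    have hBd : L - j - 1 = B' := by omega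
    have hCd : L - k - 1 = C' := by omega
    have hsum : ∑ y ∈ D6, cA i j k L y = Fintype.card (Fin L) := by
      rw [sum_D6, Fintype.card_fin]
      simp only [cA1, cA2, cA3, cA4, cA5, cA6]
      omega
    have hcc := card_count D6 (cA i j k L) hsum
    rw [prod_D6, Fintype.card_fin] at hcc
    simp only [cA1, cA2, cA3, cA4, cA5, cA6, Nat.factorial_one, Nat.factorial_zero,
      one_mul, hBd, hCd] at hcc
    have h1 : Nat.factorial (L - j) = (B' + 1) * Nat.factorial B' := by
      rw [hB']; rfl
    have h2 : Nat.factorial (L - k) = (C' + 1) * Nat.factorial C' := by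
      rw [hC']; rfl
    rw [h1, h2]
    calc Nat.card {d : Fin L → ℤ × ℤ × ℤ // (∀ t, d t ∈ D6) ∧
          ∀ y ∈ D6, (univ.filter fun t => d t = y).card = cA i j k L y}
          * (Nat.factorial (L - i) * ((B' + 1) * Nat.factorial B')
            * ((C' + 1) * Nat.factorial C'))
        = Nat.card {d : Fin L → ℤ × ℤ × ℤ // (∀ t, d t ∈ D6) ∧
          ∀ y ∈ D6, (univ.filter fun t => d t = y).card = cA i j k L y}
          * (Nat.factorial (L - i) * (Nat.factorial B' * Nat.factorial C'))
          * ((B' + 1) * (C' + 1)) := by ring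
      _ = Nat.factorial L * ((B' + 1) * (C' + 1)) := by rw [hcc]
      _ = Nat.factorial L * ((L - j) * (L - k)) := by rw [hB', hC']
  · haveI : IsEmpty {d : Fin L → ℤ × ℤ × ℤ // (∀ t, d t ∈ D6) ∧
        ∀ y ∈ D6, (univ.filter fun t => d t = y).card = cA i j k L y} := by
      refine ⟨fun d => ?_⟩
      obtain ⟨htot, _⟩ := sum_of_counts (cA i j k L) d.1 d.2.1 d.2.2
      rw [sum_D6] at htot
      simp only [cA1, cA2, cA3, cA4, cA5, cA6] at htot
      omega
    rw [Nat.card_of_isEmpty]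
    have h0 : (L - j) * (L - k) = 0 := by
      rcases not_and_or.mp hfs with h | h
      · have : L - j = 0 := by omega
        rw [this, zero_mul]
      · have : L - k = 0 := by omega
        rw [this, mul_zero]
    rw [h0, mul_zero, zero_mul]

lemma cardB_eq (i j k L : ℕ)
    (hL : i + j + k + 1 = 2 * L) (hi : i ≤ L) (hj : j ≤ L) (hk : k ≤ L) :
    Nat.card {d : Fin L → ℤ × ℤ × ℤ // (∀ t, d t ∈ D6) ∧
      ∀ y ∈ D6, (univ.filter fun t => d t = y).card = cB i j k L y}
      * (Nat.factorial (L - i) * Nat.factorial (L - j) * Nat.factorial (L - k))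
      = Nat.factorial L * ((L - i) * (L - k)) := by
  classical
  by_cases hfs : i + 1 ≤ L ∧ k + 1 ≤ L
  · obtain ⟨A', hA'⟩ : ∃ a, L - i = a + 1 := ⟨L - i - 1, by omega⟩
    obtain ⟨C', hC'⟩ : ∃ c, L - k = c + 1 := ⟨L - k - 1, by omega⟩
    have hAd : L - i - 1 = A' := by omega
    have hCd : L - k - 1 = C' := by omega
    have hsum : ∑ y ∈ D6, cB i j k L y = Fintype.card (Fin L) := by
      rw [sum_D6, Fintype.card_fin]
      simp only [cB1, cB2, cB3, cB4, cB5, cB6]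
      omega
    have hcc := card_count D6 (cB i j k L) hsum
    rw [prod_D6, Fintype.card_fin] at hcc
    simp only [cB1, cB2, cB3, cB4, cB5, cB6, Nat.factorial_one, Nat.factorial_zero,
      one_mul, hAd, hCd] at hcc
    have h1 : Nat.factorial (L - i) = (A' + 1) * Nat.factorial A' := by
      rw [hA']; rfl
    have h2 : Nat.factorial (L - k) = (C' + 1) * Nat.factorial C' := by
      rw [hC']; rfl
    rw [h1, h2]
    calc Nat.card {d : Fin L → ℤ × ℤ × ℤ // (∀ t, d t ∈ D6) ∧
          ∀ y ∈ D6, (univ.filter fun t => d t = y).card = cB i j k L y}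
          * ((A' + 1) * Nat.factorial A' * Nat.factorial (L - j)
            * ((C' + 1) * Nat.factorial C'))
        = Nat.card {d : Fin L → ℤ × ℤ × ℤ // (∀ t, d t ∈ D6) ∧
          ∀ y ∈ D6, (univ.filter fun t => d t = y).card = cB i j k L y}
          * (Nat.factorial A' * (Nat.factorial (L - j) * Nat.factorial C'))
          * ((A' + 1) * (C' + 1)) := by ring
      _ = Nat.factorial L * ((A' + 1) * (C' + 1)) := by rw [hcc]
      _ = Nat.factorial L * ((L - i) * (L - k)) := by rw [hA', hC']
  · haveI : IsEmpty {d : Fin L → ℤ × ℤ × ℤ // (∀ t, d t ∈ D6) ∧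
        ∀ y ∈ D6, (univ.filter fun t => d t = y).card = cB i j k L y} := by
      refine ⟨fun d => ?_⟩
      obtain ⟨htot, _⟩ := sum_of_counts (cB i j k L) d.1 d.2.1 d.2.2
      rw [sum_D6] at htot
      simp only [cB1, cB2, cB3, cB4, cB5, cB6] at htot
      omega
    rw [Nat.card_of_isEmpty]
    have h0 : (L - i) * (L - k) = 0 := by
      rcases not_and_or.mp hfs with h | h
      · have : L - i = 0 := by omega
        rw [this, zero_mul]
      · have : L - k = 0 := by omega
        rw [this, mul_zero]
    rw [h0, mul_zero, zero_mul]

lemma cardC_eq (i j k L : ℕ)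
    (hL : i + j + k + 1 = 2 * L) (hi : i ≤ L) (hj : j ≤ L) (hk : k ≤ L) :
    Nat.card {d : Fin L → ℤ × ℤ × ℤ // (∀ t, d t ∈ D6) ∧
      ∀ y ∈ D6, (univ.filter fun t => d t = y).card = cC i j k L y}
      * (Nat.factorial (L - i) * Nat.factorial (L - j) * Nat.factorial (L - k))
      = Nat.factorial L * ((L - i) * (L - j)) := by
  classical
  by_cases hfs : i + 1 ≤ L ∧ j + 1 ≤ L
  · obtain ⟨A', hA'⟩ : ∃ a, L - i = a + 1 := ⟨L - i - 1, by omega⟩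
    obtain ⟨B', hB'⟩ : ∃ b, L - j = b + 1 := ⟨L - j - 1, by omega⟩
    have hAd : L - i - 1 = A' := by omega
    have hBd : L - j - 1 = B' := by omega
    have hsum : ∑ y ∈ D6, cC i j k L y = Fintype.card (Fin L) := by
      rw [sum_D6, Fintype.card_fin]
      simp only [cC1, cC2, cC3, cC4, cC5, cC6]
      omega
    have hcc := card_count D6 (cC i j k L) hsum
    rw [prod_D6, Fintype.card_fin] at hcc
    simp only [cC1, cC2, cC3, cC4, cC5, cC6, Nat.factorial_one, Nat.factorial_zero,
      one_mul, hAd, hBd] at hcc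
    have h1 : Nat.factorial (L - i) = (A' + 1) * Nat.factorial A' := by
      rw [hA']; rfl
    have h2 : Nat.factorial (L - j) = (B' + 1) * Nat.factorial B' := by
      rw [hB']; rfl
    rw [h1, h2]
    calc Nat.card {d : Fin L → ℤ × ℤ × ℤ // (∀ t, d t ∈ D6) ∧
          ∀ y ∈ D6, (univ.filter fun t => d t = y).card = cC i j k L y}
          * ((A' + 1) * Nat.factorial A' * ((B' + 1) * Nat.factorial B')
            * Nat.factorial (L - k))
        = Nat.card {d : Fin L → ℤ × ℤ × ℤ // (∀ t, d t ∈ D6) ∧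
          ∀ y ∈ D6, (univ.filter fun t => d t = y).card = cC i j k L y}
          * (Nat.factorial A' * (Nat.factorial B' * Nat.factorial (L - k)))
          * ((A' + 1) * (B' + 1)) := by ring
      _ = Nat.factorial L * ((A' + 1) * (B' + 1)) := by rw [hcc]
      _ = Nat.factorial L * ((L - i) * (L - j)) := by rw [hA', hB']
  · haveI : IsEmpty {d : Fin L → ℤ × ℤ × ℤ // (∀ t, d t ∈ D6) ∧
        ∀ y ∈ D6, (univ.filter fun t => d t = y).card = cC i j k L y} := by
      refine ⟨fun d => ?_⟩
      obtain ⟨htot, _⟩ := sum_of_counts (cC i j k L) d.1 d.2.1 d.2.2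
      rw [sum_D6] at htot
      simp only [cC1, cC2, cC3, cC4, cC5, cC6] at htot
      omega
    rw [Nat.card_of_isEmpty]
    have h0 : (L - i) * (L - j) = 0 := by
      rcases not_and_or.mp hfs with h | h
      · have : L - i = 0 := by omega
        rw [this, zero_mul]
      · have : L - j = 0 := by omega
        rw [this, mul_zero]
    rw [h0, mul_zero, zero_mul]

/-- When `i+j+k+1 = 2L` and `L ≥ max(i,j,k)`, the number of shortest 18-neighbor paths
from the origin to `(i,j,k)` equals
`L!·((L−i)(L−j)+(L−j)(L−k)+(L−k)(L−i))/((L−i)!·(L−j)!·(L−k)!)`. -/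
theorem count_shortest_paths_18N_odd (i j k L : ℕ)
    (hL : i + j + k + 1 = 2 * L) (hi : i ≤ L) (hj : j ≤ L) (hk : k ≤ L) :
    Nat.card {f : Fin (L + 1) → ℤ × ℤ × ℤ //
        IsPath18 L f (0, 0, 0) ((i : ℤ), (j : ℤ), (k : ℤ))} =
      Nat.factorial L *
          ((L - i) * (L - j) + (L - j) * (L - k) + (L - k) * (L - i)) /
        (Nat.factorial (L - i) * Nat.factorial (L - j) * Nat.factorial (L - k)) := by
  classical
  -- Step 1 : paths correspond to step sequences
  have hPS : Nat.card {d : Fin L → ℤ × ℤ × ℤ // (∀ t, Adj18 0 (d t)) ∧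
        ∑ t, d t = ((i : ℤ), (j : ℤ), (k : ℤ))}
      = Nat.card {f : Fin (L + 1) → ℤ × ℤ × ℤ //
        IsPath18 L f (0, 0, 0) ((i : ℤ), (j : ℤ), (k : ℤ))} := by
    apply Nat.card_eq_of_bijective (f := fun d => ⟨pathOf L d.1, by
      refine ⟨pathOf_zero L d.1, ?_, ?_⟩
      · rw [pathOf_last]; exact d.2.2
      · intro t
        rw [adj_sub, pathOf_diff]
        exact d.2.1 t⟩)
    constructor
    · rintro ⟨d, hd⟩ ⟨d', hd'⟩ h
      have hpp : pathOf L d = pathOf L d' := congrArg Subtype.val h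
      apply Subtype.ext
      funext t
      show d t = d' t
      rw [← pathOf_diff L d t, ← pathOf_diff L d' t, hpp]
    · rintro ⟨f, h0, hlast, hadj⟩
      refine ⟨⟨fun t => f t.succ - f t.castSucc, fun t => (adj_sub _ _).mp (hadj t), ?_⟩, ?_⟩
      · have := pathOf_partial L (fun t => f t.succ - f t.castSucc) f (fun t => rfl) (Fin.last L)
        rw [← pathOf_last, this, h0, hlast]
        simp
      · apply Subtype.ext
        funext t
        have := pathOf_partial L (fun t => f t.succ - f t.castSucc) f (fun t => rfl) t
        show pathOf L (fun t => f t.succ - f t.castSucc) t = f t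
        rw [this, h0]
        simp
  rw [← hPS, ← card_split i j k L hL hi hj hk]
  -- Step 2 : arithmetic
  have hdpos : 0 < Nat.factorial (L - i) * Nat.factorial (L - j) * Nat.factorial (L - k) :=
    Nat.mul_pos (Nat.mul_pos (Nat.factorial_pos _) (Nat.factorial_pos _)) (Nat.factorial_pos _)
  have hmain : (Nat.card {d : Fin L → ℤ × ℤ × ℤ // (∀ t, d t ∈ D6) ∧
        ∀ y ∈ D6, (univ.filter fun t => d t = y).card = cA i j k L y}
      + Nat.card {d : Fin L → ℤ × ℤ × ℤ // (∀ t, d t ∈ D6) ∧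
        ∀ y ∈ D6, (univ.filter fun t => d t = y).card = cB i j k L y}
      + Nat.card {d : Fin L → ℤ × ℤ × ℤ // (∀ t, d t ∈ D6) ∧
        ∀ y ∈ D6, (univ.filter fun t => d t = y).card = cC i j k L y})
      * (Nat.factorial (L - i) * Nat.factorial (L - j) * Nat.factorial (L - k))
      = Nat.factorial L *
        ((L - i) * (L - j) + (L - j) * (L - k) + (L - k) * (L - i)) := by
    rw [add_mul, add_mul, cardA_eq i j k L hL hi hj hk, cardB_eq i j k L hL hi hj hk,
      cardC_eq i j k L hL hi hj hk]
    rw [show (L - i) * (L - k) = (L - k) * (L - i) from mul_comm _ _]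
    ring
  exact (Nat.div_eq_of_eq_mul_left hdpos hmain.symm).symm
end

section
/- Let i,j,k ≥ 0 with i+j+k even and L = (i+j+k)/2 ≥ max(i,j,k). Then every shortest 18-neighbor path from (0,0,0) to (i,j,k) uses only the three 'double' steps (0,1,1), (1,0,1), (1,1,0), using exactly L−i, L−j, and L−k of them respectively. -/
lemma tel18 {G : Type*} [AddCommGroup G] (n : ℕ) (f : Fin (n+1) → G) :
    ∑ t : Fin n, (f t.succ - f t.castSucc) = f (Fin.last n) - f 0 := by
  induction n with
  | zero => simp
  | succ n ih =>
    rw [Fin.sum_univ_castSucc]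
    have := ih (f ∘ Fin.castSucc)
    simp only [Function.comp] at this
    simp only [Fin.succ_castSucc] at this ⊢
    rw [this]
    simp [Fin.succ_last]

/-- When `i+j+k = 2L` and `L ≥ max(i,j,k)`, every shortest 18-neighbor path from the origin
to `(i,j,k)` uses only the double steps `(0,1,1)`, `(1,0,1)`, `(1,1,0)`, with exactly `L−i`,
`L−j`, `L−k` of them respectively. -/
theorem shortest_paths_18N_even_steps (i j k L : ℕ)
    (hL : i + j + k = 2 * L) (hi : i ≤ L) (hj : j ≤ L) (hk : k ≤ L)
    (f : Fin (L + 1) → ℤ × ℤ × ℤ)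
    (hf : IsPath18 L f (0, 0, 0) ((i : ℤ), (j : ℤ), (k : ℤ))) :
    (∀ t : Fin L,
        f t.succ - f t.castSucc ∈
          ({((0 : ℤ), (1 : ℤ), (1 : ℤ)), (1, 0, 1), (1, 1, 0)} : Set (ℤ × ℤ × ℤ))) ∧
      (Finset.univ.filter fun t : Fin L =>
          f t.succ - f t.castSucc = ((0 : ℤ), (1 : ℤ), (1 : ℤ))).card = L - i ∧
      (Finset.univ.filter fun t : Fin L =>
          f t.succ - f t.castSucc = ((1 : ℤ), (0 : ℤ), (1 : ℤ))).card = L - j ∧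
      (Finset.univ.filter fun t : Fin L =>
          f t.succ - f t.castSucc = ((1 : ℤ), (1 : ℤ), (0 : ℤ))).card = L - k := by
  obtain ⟨h0, hlast, hadj⟩ := hf
  set d : Fin L → ℤ × ℤ × ℤ := fun t => f t.succ - f t.castSucc with hd
  have htel : ∑ t : Fin L, d t = ((i:ℤ), (j:ℤ), (k:ℤ)) := by
    rw [hd, tel18, h0, hlast]; simp
  have h1 : ∑ t : Fin L, (d t).1 = (i:ℤ) := by
    have := congrArg Prod.fst htel
    simpa [Prod.fst_sum] using this
  have h2 : ∑ t : Fin L, (d t).2.1 = (j:ℤ) := by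
    have := congrArg (fun p => p.2.1) htel
    simpa [Prod.fst_sum, Prod.snd_sum] using this
  have h3 : ∑ t : Fin L, (d t).2.2 = (k:ℤ) := by
    have := congrArg (fun p => p.2.2) htel
    simpa [Prod.snd_sum] using this
  -- bounds per step
  have hb : ∀ t : Fin L, (d t).1.natAbs ≤ 1 ∧ (d t).2.1.natAbs ≤ 1 ∧ (d t).2.2.natAbs ≤ 1 ∧
      (d t).1.natAbs + (d t).2.1.natAbs + (d t).2.2.natAbs ≤ 2 := by
    intro t
    obtain ⟨_, a, b, c, s⟩ := hadj t
    simp only [hd, Prod.fst_sub, Prod.snd_sub]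
    refine ⟨?_, ?_, ?_, ?_⟩ <;> omega
  -- sum of coordinates per step is ≤ 2
  have hle : ∀ t : Fin L, (d t).1 + (d t).2.1 + (d t).2.2 ≤ 2 := by
    intro t
    obtain ⟨a, b, c, s⟩ := hb t
    omega
  have hsum2 : ∑ t : Fin L, ((d t).1 + (d t).2.1 + (d t).2.2) = 2 * L := by
    rw [Finset.sum_add_distrib, Finset.sum_add_distrib, h1, h2, h3]
    push_cast
    omega
  have heq2 : ∀ t : Fin L, (d t).1 + (d t).2.1 + (d t).2.2 = 2 := by
    by_contra h
    push_neg at h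
    obtain ⟨t0, ht0⟩ := h
    have hlt : (d t0).1 + (d t0).2.1 + (d t0).2.2 < 2 := lt_of_le_of_ne (hle t0) ht0
    have : ∑ t : Fin L, ((d t).1 + (d t).2.1 + (d t).2.2) < ∑ _t : Fin L, (2:ℤ) :=
      Finset.sum_lt_sum (fun t _ => hle t) ⟨t0, Finset.mem_univ _, hlt⟩
    rw [hsum2] at this
    simp at this
    omega
  -- membership
  have hmem : ∀ t : Fin L, d t = ((0:ℤ),(1:ℤ),(1:ℤ)) ∨ d t = ((1:ℤ),(0:ℤ),(1:ℤ)) ∨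
      d t = ((1:ℤ),(1:ℤ),(0:ℤ)) := by
    intro t
    obtain ⟨a, b, c, s⟩ := hb t
    have e := heq2 t
    have : ((d t).1 = 0 ∧ (d t).2.1 = 1 ∧ (d t).2.2 = 1) ∨
        ((d t).1 = 1 ∧ (d t).2.1 = 0 ∧ (d t).2.2 = 1) ∨
        ((d t).1 = 1 ∧ (d t).2.1 = 1 ∧ (d t).2.2 = 0) := by omega
    rcases this with ⟨x,y,z⟩ | ⟨x,y,z⟩ | ⟨x,y,z⟩
    · exact Or.inl (Prod.ext x (Prod.ext y z))
    · exact Or.inr (Or.inl (Prod.ext x (Prod.ext y z)))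
    · exact Or.inr (Or.inr (Prod.ext x (Prod.ext y z)))
  refine ⟨fun t => by rcases hmem t with h|h|h <;> simp [hd] at h ⊢ <;> simp [h], ?_, ?_, ?_⟩
  · -- count of (0,1,1)
    have hind : ∀ t : Fin L, (d t).1 = if d t = ((0:ℤ),(1:ℤ),(1:ℤ)) then 0 else 1 := by
      intro t
      rcases hmem t with h|h|h <;> rw [h] <;> norm_num
    have h' : (i:ℤ) = (Finset.univ.filter fun t : Fin L => ¬ d t = ((0:ℤ),(1:ℤ),(1:ℤ))).card := by
      rw [← h1, Finset.sum_congr rfl (fun t _ => hind t), Finset.sum_ite]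
      simp
    have hpart := Finset.card_filter_add_card_filter_not
      (s := (Finset.univ : Finset (Fin L))) (p := fun t : Fin L => d t = ((0:ℤ),(1:ℤ),(1:ℤ)))
    rw [Finset.card_univ, Fintype.card_fin] at hpart
    simp only [hd] at h' hpart
    omega
  · have hind : ∀ t : Fin L, (d t).2.1 = if d t = ((1:ℤ),(0:ℤ),(1:ℤ)) then 0 else 1 := by
      intro t
      rcases hmem t with h|h|h <;> rw [h] <;> norm_num
    have h' : (j:ℤ) = (Finset.univ.filter fun t : Fin L => ¬ d t = ((1:ℤ),(0:ℤ),(1:ℤ))).card := by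
      rw [← h2, Finset.sum_congr rfl (fun t _ => hind t), Finset.sum_ite]
      simp
    have hpart := Finset.card_filter_add_card_filter_not
      (s := (Finset.univ : Finset (Fin L))) (p := fun t : Fin L => d t = ((1:ℤ),(0:ℤ),(1:ℤ)))
    rw [Finset.card_univ, Fintype.card_fin] at hpart
    simp only [hd] at h' hpart
    omega
  · have hind : ∀ t : Fin L, (d t).2.2 = if d t = ((1:ℤ),(1:ℤ),(0:ℤ)) then 0 else 1 := by
      intro t
      rcases hmem t with h|h|h <;> rw [h] <;> norm_num
    have h' : (k:ℤ) = (Finset.univ.filter fun t : Fin L => ¬ d t = ((1:ℤ),(1:ℤ),(0:ℤ))).card := by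
      rw [← h3, Finset.sum_congr rfl (fun t _ => hind t), Finset.sum_ite]
      simp
    have hpart := Finset.card_filter_add_card_filter_not
      (s := (Finset.univ : Finset (Fin L))) (p := fun t : Fin L => d t = ((1:ℤ),(1:ℤ),(0:ℤ)))
    rw [Finset.card_univ, Fintype.card_fin] at hpart
    simp only [hd] at h' hpart
    omega
end
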